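/- Let X be a random variable uniform on {0,1}, Z a random variable in {0,1,⊥}, and L another random variable, all on a finite probability space. Define q(l) = Pr(Z ≠ ⊥ | L = l), q = Pr(Z ≠ ⊥), ε(l) = Pr(Z ≠ ⊥ and Z ≠ X | L = l), ε = Pr(Z ≠ ⊥ and Z ≠ X). Then H(X | Z, L) ≤ 1 − q·(1 − H2(ε/q)) whenever q > 0 (and H(X | Z, L) ≤ 1 if q = 0). -/

import Mathlib

open Finset Real
open scoped Classical

/-- Probability of an event under a weight function on a finite sample space. -/
noncomputable def pr {Ω : Type*} [Fintype Ω] (μ : Ω → ℝ) (E : Ω → Prop) : ℝ :=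
  ∑ ω, if E ω then μ ω else 0

/-- Shannon entropy (base 2) of a random variable on a finite probability space. -/
noncomputable def ent {Ω α : Type*} [Fintype Ω] [Fintype α]
    (μ : Ω → ℝ) (X : Ω → α) : ℝ :=
  -∑ a : α, pr μ (fun ω => X ω = a) * Real.logb 2 (pr μ (fun ω => X ω = a))

/-- Conditional Shannon entropy H(X | Y) (base 2). -/
noncomputable def condEnt {Ω α β : Type*} [Fintype Ω] [Fintype α] [Fintype β]
    (μ : Ω → ℝ) (X : Ω → α) (Y : Ω → β) : ℝ :=
  -∑ a : α, ∑ b : β,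
    pr μ (fun ω => X ω = a ∧ Y ω = b) *
      Real.logb 2 (pr μ (fun ω => X ω = a ∧ Y ω = b) / pr μ (fun ω => Y ω = b))

/-- Conditional mutual information I(X : Y | Z) = H(X|Z) - H(X|Y,Z). -/
noncomputable def condMI {Ω α β γ : Type*} [Fintype Ω] [Fintype α] [Fintype β] [Fintype γ]
    (μ : Ω → ℝ) (X : Ω → α) (Y : Ω → β) (Z : Ω → γ) : ℝ :=
  condEnt μ X Z - condEnt μ X (fun ω => (Y ω, Z ω))

/-- Mutual information I(X : Y) = H(X) - H(X|Y). -/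
noncomputable def mutInf {Ω α β : Type*} [Fintype Ω] [Fintype α] [Fintype β]
    (μ : Ω → ℝ) (X : Ω → α) (Y : Ω → β) : ℝ :=
  ent μ X - condEnt μ X Y

/-- Binary entropy function (base 2). -/
noncomputable def H2 (x : ℝ) : ℝ := -x * Real.logb 2 x - (1 - x) * Real.logb 2 (1 - x)

/-- The prefix X[1..j] of a length-`n` bit string, encoded with `none` outside the prefix. -/
def prefOf {n : ℕ} (x : Fin n → Bool) (j : Fin (n+1)) : Fin n → Option Bool :=
  fun i => if (i : ℕ) < (j : ℕ) then some (x i) else none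

/-- The suffix X[j+1..n] of a length-`n` bit string, encoded with `none` inside the prefix. -/
def suffOf {n : ℕ} (x : Fin n → Bool) (j : Fin (n+1)) : Fin n → Option Bool :=
  fun i => if (j : ℕ) ≤ (i : ℕ) then some (x i) else none

/-!
Conditioned on a value `w = (z, l)` of `(Z, L)`, the bit `X` contributes `Pr(W = w) · H2(e(w))`,
where `e(w)` is the conditional probability that `X` differs from any fixed guess; guessing `z`
when `z ≠ ⊥` makes `e(w)` the conditional error probability. The cells with `Z = ⊥` carry total
weight `1 - q` and contribute at most one bit each, and on the remaining cells, of total weight `q`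
and total error mass `ε`, concavity of `H2` (Jensen) bounds the contribution by `q · H2(ε / q)`.
-/

lemma H2_eq_binEntropy_div_log_two (x : ℝ) : H2 x = binEntropy x / log 2 := by
  unfold H2 binEntropy
  rw [log_inv, log_inv, logb, logb]
  ring

lemma H2_le_one (x : ℝ) : H2 x ≤ 1 := by
  rw [H2_eq_binEntropy_div_log_two, div_le_one (log_pos one_lt_two)]
  exact binEntropy_le_log_two

lemma H2_one_sub (x : ℝ) : H2 (1 - x) = H2 x := by
  unfold H2
  rw [sub_sub_cancel]
  ring

lemma concaveOn_H2 : ConcaveOn ℝ (Set.Icc 0 1) H2 := by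
  have h : H2 = fun x => (log 2)⁻¹ • binEntropy x := by
    funext x
    rw [H2_eq_binEntropy_div_log_two, smul_eq_mul, div_eq_inv_mul]
  rw [h]
  exact strictConcave_binEntropy.concaveOn.smul (by positivity)

/-- Jensen's inequality for the perspective `(p, e) ↦ p · H2 (e / p)` of the binary entropy. -/
lemma sum_mul_H2_div_le {ι : Type*} (s : Finset ι) (p e : ι → ℝ)
    (he : ∀ i ∈ s, 0 ≤ e i) (hep : ∀ i ∈ s, e i ≤ p i) (hp : 0 < ∑ i ∈ s, p i) :
    ∑ i ∈ s, p i * H2 (e i / p i) ≤ (∑ i ∈ s, p i) * H2 ((∑ i ∈ s, e i) / ∑ i ∈ s, p i) := by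
  set q := ∑ i ∈ s, p i
  have hp0 : ∀ i ∈ s, 0 ≤ p i := fun i hi => (he i hi).trans (hep i hi)
  have hweight : ∀ i ∈ s, p i / q * (e i / p i) = e i / q := by
    intro i hi
    rcases (hp0 i hi).eq_or_lt with h0 | h0
    · rw [← h0, le_antisymm (h0 ▸ hep i hi) (he i hi)]
      simp
    · field_simp
  have hjensen := concaveOn_H2.le_map_sum (t := s) (w := fun i => p i / q)
    (p := fun i => e i / p i) (fun i hi => div_nonneg (hp0 i hi) hp.le)
    (by rw [← Finset.sum_div, div_self hp.ne'])
    (fun i hi => ⟨div_nonneg (he i hi) (hp0 i hi), div_le_one_of_le₀ (hep i hi) (hp0 i hi)⟩)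
  simp only [smul_eq_mul, Finset.sum_congr rfl hweight, ← Finset.sum_div] at hjensen
  simp only [div_mul_eq_mul_div, ← Finset.sum_div, div_le_iff₀ hp] at hjensen
  rwa [mul_comm]

section Probability

variable {Ω : Type*} [Fintype Ω] {μ : Ω → ℝ}

lemma pr_congr {E F : Ω → Prop} (h : ∀ ω, E ω ↔ F ω) : pr μ E = pr μ F :=
  Finset.sum_congr rfl fun ω _ => if_congr (h ω) rfl rfl

lemma pr_nonneg (hμ : ∀ ω, 0 ≤ μ ω) (E : Ω → Prop) : 0 ≤ pr μ E :=
  Finset.sum_nonneg fun ω _ => by split <;> [exact hμ ω; exact le_rfl]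

lemma pr_mono (hμ : ∀ ω, 0 ≤ μ ω) {E F : Ω → Prop} (h : ∀ ω, E ω → F ω) :
    pr μ E ≤ pr μ F := by
  refine Finset.sum_le_sum fun ω _ => ?_
  by_cases hE : E ω
  · simp [hE, h ω hE]
  · simp only [hE, if_false]
    split <;> [exact hμ ω; exact le_rfl]

lemma pr_add_pr_not (hμ : ∑ ω, μ ω = 1) (E : Ω → Prop) :
    pr μ E + pr μ (fun ω => ¬ E ω) = 1 := by
  unfold pr
  rw [← Finset.sum_add_distrib, ← hμ]
  refine Finset.sum_congr rfl fun ω _ => ?_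
  by_cases hE : E ω <;> simp [hE]

lemma sum_pr_and_eq {β : Type*} [Fintype β] (W : Ω → β) (E : Ω → Prop) (S : β → Prop)
    [DecidablePred S] :
    ∑ w ∈ Finset.univ.filter S, pr μ (fun ω => E ω ∧ W ω = w) = pr μ (fun ω => E ω ∧ S (W ω)) := by
  unfold pr
  rw [Finset.sum_comm]
  refine Finset.sum_congr rfl fun ω _ => ?_
  by_cases hE : E ω
  · simp [hE, Finset.sum_ite_eq]
  · simp [hE]

lemma sum_pr_eq {β : Type*} [Fintype β] (W : Ω → β) (S : β → Prop) [DecidablePred S] :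
    ∑ w ∈ Finset.univ.filter S, pr μ (fun ω => W ω = w) = pr μ (fun ω => S (W ω)) := by
  simpa using sum_pr_and_eq (μ := μ) W (fun _ => True) S

lemma pr_true_and_add_pr_false_and {β : Type*} (X : Ω → Bool) (W : Ω → β) (w : β) :
    pr μ (fun ω => X ω = true ∧ W ω = w) + pr μ (fun ω => X ω = false ∧ W ω = w)
      = pr μ (fun ω => W ω = w) := by
  unfold pr
  rw [← Finset.sum_add_distrib]
  refine Finset.sum_congr rfl fun ω _ => ?_
  cases hX : X ω <;> by_cases hW : W ω = w <;> simp [hX, hW]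

lemma neg_add_mul_logb_div_eq_mul_H2 {p s : ℝ} (hp : 0 ≤ p) (hps : p ≤ s) :
    -(p * logb 2 (p / s) + (s - p) * logb 2 ((s - p) / s)) = s * H2 (p / s) := by
  rcases (hp.trans hps).eq_or_lt with hs | hs
  · simp [← hs, le_antisymm (hs ▸ hps) hp]
  · have h : 1 - p / s = (s - p) / s := by field_simp
    unfold H2
    rw [h]
    field_simp
    ring

lemma condEnt_bool_eq_sum_H2 {β : Type*} [Fintype β] (hμ : ∀ ω, 0 ≤ μ ω)
    (X : Ω → Bool) (W : Ω → β) :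
    condEnt μ X W = ∑ w, pr μ (fun ω => W ω = w) *
      H2 (pr μ (fun ω => X ω = true ∧ W ω = w) / pr μ (fun ω => W ω = w)) := by
  unfold condEnt
  rw [Fintype.sum_bool, neg_add, ← Finset.sum_neg_distrib, ← Finset.sum_neg_distrib,
    ← Finset.sum_add_distrib]
  refine Finset.sum_congr rfl fun w _ => ?_
  rw [← neg_add_mul_logb_div_eq_mul_H2 (pr_nonneg hμ _) (pr_mono hμ fun ω h => h.2),
    ← pr_true_and_add_pr_false_and X W w, add_sub_cancel_left]
  ring

lemma mul_H2_pr_true_eq_mul_H2_pr_ne {β : Type*} (X : Ω → Bool) (W : Ω → β) (w : β) (b : Bool) :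
    pr μ (fun ω => W ω = w) *
        H2 (pr μ (fun ω => X ω = true ∧ W ω = w) / pr μ (fun ω => W ω = w)) =
      pr μ (fun ω => W ω = w) *
        H2 (pr μ (fun ω => X ω ≠ b ∧ W ω = w) / pr μ (fun ω => W ω = w)) := by
  have hsplit := pr_true_and_add_pr_false_and (μ := μ) X W w
  rcases eq_or_ne (pr μ (fun ω => W ω = w)) 0 with h0 | h0
  · simp [h0]
  cases b
  · simp only [ne_eq, Bool.not_eq_false]
  · rw [← H2_one_sub, one_sub_div h0]
    congr 3
    rw [← hsplit, add_sub_cancel_left]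
    exact pr_congr fun ω => by simp

lemma condEnt_bool_eq_sum_H2_pr_ne {β : Type*} [Fintype β] (hμ : ∀ ω, 0 ≤ μ ω)
    (X : Ω → Bool) (W : Ω → β) (guess : β → Bool) :
    condEnt μ X W = ∑ w, pr μ (fun ω => W ω = w) *
      H2 (pr μ (fun ω => X ω ≠ guess w ∧ W ω = w) / pr μ (fun ω => W ω = w)) := by
  rw [condEnt_bool_eq_sum_H2 hμ]
  exact Finset.sum_congr rfl fun w _ => mul_H2_pr_true_eq_mul_H2_pr_ne X W w (guess w)

lemma condEnt_bool_le_one {β : Type*} [Fintype β] (hμ : ∀ ω, 0 ≤ μ ω) (hsum : ∑ ω, μ ω = 1)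
    (X : Ω → Bool) (W : Ω → β) : condEnt μ X W ≤ 1 := by
  rw [condEnt_bool_eq_sum_H2 hμ]
  calc _ ≤ ∑ w, pr μ (fun ω => W ω = w) :=
        Finset.sum_le_sum fun w _ => mul_le_of_le_one_right (pr_nonneg hμ _) (H2_le_one _)
    _ = 1 := by simpa [pr, hsum] using sum_pr_eq (μ := μ) W (fun _ => True)

lemma sum_filter_mul_H2_le_pr {β : Type*} [Fintype β] (hμ : ∀ ω, 0 ≤ μ ω) (W : Ω → β)
    (S : β → Prop) [DecidablePred S] (f : β → ℝ) :
    ∑ w ∈ Finset.univ.filter S, pr μ (fun ω => W ω = w) * H2 (f w) ≤ pr μ (fun ω => S (W ω)) :=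
  sum_pr_eq W S ▸
    Finset.sum_le_sum fun _ _ => mul_le_of_le_one_right (pr_nonneg hμ _) (H2_le_one _)

lemma sum_filter_mul_H2_pr_div_le {β : Type*} [Fintype β] (hμ : ∀ ω, 0 ≤ μ ω) (W : Ω → β)
    (E : Ω → Prop) (S : β → Prop) [DecidablePred S] (hS : 0 < pr μ (fun ω => S (W ω))) :
    ∑ w ∈ Finset.univ.filter S, pr μ (fun ω => W ω = w) *
        H2 (pr μ (fun ω => E ω ∧ W ω = w) / pr μ (fun ω => W ω = w)) ≤
      pr μ (fun ω => S (W ω)) *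
        H2 (pr μ (fun ω => E ω ∧ S (W ω)) / pr μ (fun ω => S (W ω))) := by
  rw [← sum_pr_and_eq W E S, ← sum_pr_eq W S]
  rw [← sum_pr_eq W S] at hS
  exact sum_mul_H2_div_le _ _ _ (fun _ _ => pr_nonneg hμ _)
    (fun _ _ => pr_mono hμ fun _ h => h.2) hS

end Probability

lemma ne_and_eq_some_iff {γ : Type*} {x b : Bool} {z : Option Bool} {l l' : γ} :
    x ≠ b ∧ (z, l) = (some b, l') ↔ (z ≠ none ∧ z ≠ some x) ∧ (z, l) = (some b, l') := by
  simp only [Prod.mk.injEq]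
  constructor
  · rintro ⟨hx, rfl, rfl⟩
    simp [Ne.symm hx]
  · rintro ⟨⟨-, hzx⟩, rfl, rfl⟩
    simp_all [eq_comm]

theorem stmt8_general {Ω γ : Type*} [Fintype Ω] [Fintype γ] (μ : Ω → ℝ)
    (hpos : ∀ ω, 0 ≤ μ ω) (hsum : ∑ ω, μ ω = 1)
    (X : Ω → Bool) (Z : Ω → Option Bool) (L : Ω → γ) :
    (0 < pr μ (fun ω => Z ω ≠ none) →
      condEnt μ X (fun ω => (Z ω, L ω)) ≤
        1 - pr μ (fun ω => Z ω ≠ none) *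
          (1 - H2 (pr μ (fun ω => Z ω ≠ none ∧ Z ω ≠ some (X ω))
                    / pr μ (fun ω => Z ω ≠ none)))) ∧
    (pr μ (fun ω => Z ω ≠ none) = 0 → condEnt μ X (fun ω => (Z ω, L ω)) ≤ 1) := by
  set W : Ω → Option Bool × γ := fun ω => (Z ω, L ω)
  refine ⟨fun hq => ?_, fun _ => condEnt_bool_le_one hpos hsum X W⟩
  set E : Ω → Prop := fun ω => Z ω ≠ none ∧ Z ω ≠ some (X ω)
  -- guess `b` on the cells where `Z = some b`; there the guess errs exactly on `E`
  rw [condEnt_bool_eq_sum_H2_pr_ne hpos X W (fun w => w.1.getD false),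
    ← Finset.sum_filter_add_sum_filter_not Finset.univ (fun w => w.1 = none)]
  have hguess : ∀ w ∈ Finset.univ.filter (fun w : Option Bool × γ => ¬ w.1 = none),
      pr μ (fun ω => X ω ≠ w.1.getD false ∧ W ω = w) = pr μ (fun ω => E ω ∧ W ω = w) := by
    rintro ⟨_ | b, l⟩ hw
    · simp at hw
    · exact pr_congr fun ω => ne_and_eq_some_iff
  have hBot := sum_filter_mul_H2_le_pr hpos W (fun w => w.1 = none)
    (fun w => pr μ (fun ω => X ω ≠ w.1.getD false ∧ W ω = w) / pr μ (fun ω => W ω = w))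
  have hNotBot := sum_filter_mul_H2_pr_div_le hpos W E (fun w => ¬ w.1 = none) hq
  refine (add_le_add hBot ((Finset.sum_congr rfl fun w hw => ?_).trans_le hNotBot)).trans ?_
  · rw [hguess w hw]
  have hE : pr μ (fun ω => E ω ∧ ¬ (W ω).1 = none) = pr μ E :=
    pr_congr fun ω => and_iff_left_of_imp And.left
  have hnone := pr_add_pr_not hsum (fun ω => Z ω ≠ none)
  simp only [not_not] at hnone
  simp only [hE, W]
  linarith

theorem stmt8 {Ω γ : Type*} [Fintype Ω] [Fintype γ] (μ : Ω → ℝ)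
    (hpos : ∀ ω, 0 ≤ μ ω) (hsum : ∑ ω, μ ω = 1)
    (X : Ω → Bool) (Z : Ω → Option Bool) (L : Ω → γ)
    (hX : ∀ b, pr μ (fun ω => X ω = b) = 1/2) :
    (0 < pr μ (fun ω => Z ω ≠ none) →
      condEnt μ X (fun ω => (Z ω, L ω)) ≤
        1 - pr μ (fun ω => Z ω ≠ none) *
          (1 - H2 (pr μ (fun ω => Z ω ≠ none ∧ Z ω ≠ some (X ω))
                    / pr μ (fun ω => Z ω ≠ none)))) ∧
    (pr μ (fun ω => Z ω ≠ none) = 0 → condEnt μ X (fun ω => (Z ω, L ω)) ≤ 1) :=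
  stmt8_general μ hpos hsum X Z L
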